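/- arXiv:1903.01909 — 4 statements merged into one kernel-verified Lean document; each statement's English description precedes it below -/
import Mathlib

section
/- For any string T of length n over an alphabet of size σ ≥ 2, and for any parsing of T into non-empty phrases where any two equal phrases (except possibly the last phrase) are followed by distinct symbols, the number of phrases of length strictly less than L is at most 1 + ∑_{k=1}^{L} σ^{k+1}. -/
/-!
Pairing each phrase except the last with the first symbol of the phrase after it gives a word one
symbol longer. By hypothesis these words are pairwise distinct, and for a phrase of length `k < L`
the word has length `k + 1 ∈ [2, L]`; there are at most `σ ^ s` words of length `s`. The last
phrase accounts for the `1`.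
-/

/-- Start position (0-based) of the `j`-th phrase of a parsing. -/
def phraseStart {α : Type*} (P : List (List α)) (j : ℕ) : ℕ := ((P.take j).flatten).length

open Finset

theorem List.length_filter_range_le_pred_add_one (n : ℕ) (p : ℕ → Bool) :
    ((List.range n).filter p).length ≤ ((List.range (n - 1)).filter p).length + 1 := by
  cases n with
  | zero => simp
  | succ n =>
    rw [List.range_succ, List.filter_append, List.length_append, Nat.add_sub_cancel]
    gcongr
    exact (List.length_filter_le _ _).trans_eq List.length_singleton

theorem Finset.card_le_sum_pow_of_length_mem {α : Type*} [Fintype α] {W : Finset (List α)}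
    {S : Finset ℕ} (hW : ∀ w ∈ W, w.length ∈ S) : #W ≤ ∑ s ∈ S, Fintype.card α ^ s := by
  rw [card_eq_sum_card_fiberwise hW]
  exact sum_le_sum fun _ _ => card_filter_length_eq_le

namespace Parsing

variable {α : Type*} (P : List (List α))

def extendedPhrase (i : ℕ) : List α :=
  P.getD i [] ++ (P.getD (i + 1) []).head?.toList

def NextSymbolsDistinct : Prop :=
  ∀ i j : ℕ, i < j → j + 1 < P.length → P.getD i [] = P.getD j [] →
    (P.getD (i + 1) []).head? ≠ (P.getD (j + 1) []).head?

variable {P}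

theorem getD_ne_nil (hne : ∀ Q ∈ P, Q ≠ []) {i : ℕ} (hi : i < P.length) : P.getD i [] ≠ [] := by
  rw [List.getD_eq_getElem _ _ hi]
  exact hne _ (List.getElem_mem hi)

theorem extendedPhrase_eq_append_singleton (hne : ∀ Q ∈ P, Q ≠ []) {i : ℕ}
    (hi : i + 1 < P.length) :
    ∃ a, (P.getD (i + 1) []).head? = some a ∧ extendedPhrase P i = P.getD i [] ++ [a] := by
  obtain ⟨a, l, hal⟩ := List.exists_cons_of_ne_nil (getD_ne_nil hne hi)
  exact ⟨a, by rw [hal]; rfl, by rw [extendedPhrase, hal]; rfl⟩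

theorem length_extendedPhrase (hne : ∀ Q ∈ P, Q ≠ []) {i : ℕ} (hi : i + 1 < P.length) :
    (extendedPhrase P i).length = (P.getD i []).length + 1 := by
  obtain ⟨a, -, he⟩ := extendedPhrase_eq_append_singleton hne hi
  simp [he]

theorem extendedPhrase_injOn (hne : ∀ Q ∈ P, Q ≠ []) (hfollow : NextSymbolsDistinct P) :
    Set.InjOn (extendedPhrase P) {i | i + 1 < P.length} := by
  have hne_of_lt : ∀ i j, i < j → j + 1 < P.length → extendedPhrase P i ≠ extendedPhrase P j := by
    intro i j hij hj heq
    obtain ⟨a, ha, hea⟩ := extendedPhrase_eq_append_singleton hne (i := i) (by omega)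
    obtain ⟨b, hb, heb⟩ := extendedPhrase_eq_append_singleton hne hj
    rw [hea, heb, List.append_singleton_inj] at heq
    exact hfollow i j hij hj heq.1 (by rw [ha, hb, heq.2])
  intro i hi j hj heq
  by_contra hij
  rcases Nat.lt_or_gt_of_ne hij with hlt | hgt
  · exact hne_of_lt i j hlt hj heq
  · exact hne_of_lt j i hgt hi heq.symm

theorem length_filter_short_nonlast_le [Fintype α] (L : ℕ) (hne : ∀ Q ∈ P, Q ≠ [])
    (hfollow : NextSymbolsDistinct P) :
    ((List.range (P.length - 1)).filter (fun i => (P.getD i []).length < L)).length ≤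
      ∑ s ∈ Icc 2 L, Fintype.card α ^ s := by
  classical
  set short := (List.range (P.length - 1)).filter (fun i => (P.getD i []).length < L)
  have hshort : ∀ i ∈ short, i + 1 < P.length ∧ (P.getD i []).length < L := by
    intro i hi
    simp only [short, List.mem_filter, List.mem_range, decide_eq_true_eq] at hi
    exact ⟨by omega, hi.2⟩
  have hnodup : (short.map (extendedPhrase P)).Nodup :=
    (List.nodup_range.filter _).map_on fun i hi j hj =>
      extendedPhrase_injOn hne hfollow (hshort i hi).1 (hshort j hj).1
  calc short.length = #(short.map (extendedPhrase P)).toFinset := by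
        rw [List.toFinset_card_of_nodup hnodup, List.length_map]
    _ ≤ ∑ s ∈ Icc 2 L, Fintype.card α ^ s := by
        refine card_le_sum_pow_of_length_mem fun w hw => ?_
        obtain ⟨i, hi, rfl⟩ := List.mem_map.mp (List.mem_toFinset.mp hw)
        obtain ⟨hi1, hiL⟩ := hshort i hi
        have hpos := List.length_pos_iff.mpr (getD_ne_nil hne (Nat.lt_of_succ_lt hi1))
        rw [length_extendedPhrase hne hi1, mem_Icc]
        omega

end Parsing

theorem short_phrases_bound_general (σ L : ℕ)
    (P : List (List (Fin σ)))
    (hne : ∀ Q ∈ P, Q ≠ [])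
    (hfollow : ∀ i j : ℕ, i < j → j + 1 < P.length → P.getD i [] = P.getD j [] →
      (P.getD (i + 1) []).head? ≠ (P.getD (j + 1) []).head?) :
    ((List.range P.length).filter (fun i => (P.getD i []).length < L)).length ≤
      1 + ∑ k ∈ Finset.Icc 1 L, σ ^ (k + 1) := by
  have hshift : ∑ k ∈ Icc 1 L, σ ^ (k + 1) = ∑ s ∈ Icc 2 (L + 1), σ ^ s := by
    rw [show Icc 2 (L + 1) = (Icc 1 L).map (addRightEmbedding 1) from
      (map_add_right_Icc 1 L 1).symm, sum_map]
    rfl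
  calc _ ≤ ((List.range (P.length - 1)).filter (fun i => (P.getD i []).length < L)).length + 1 :=
        List.length_filter_range_le_pred_add_one _ _
    _ ≤ ∑ s ∈ Icc 2 L, σ ^ s + 1 :=
        Nat.add_le_add_right (by simpa using Parsing.length_filter_short_nonlast_le L hne hfollow) 1
    _ ≤ 1 + ∑ k ∈ Icc 1 L, σ ^ (k + 1) := by
        rw [hshift, add_comm]
        gcongr
        omega

theorem short_phrases_bound (σ L : ℕ) (hσ : 2 ≤ σ)
    (T : List (Fin σ)) (P : List (List (Fin σ)))
    (hjoin : T = P.flatten) (hne : ∀ Q ∈ P, Q ≠ [])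
    (hfollow : ∀ i j : ℕ, i < j → j + 1 < P.length → P.getD i [] = P.getD j [] →
      (P.getD (i + 1) []).head? ≠ (P.getD (j + 1) []).head?) :
    ((List.range P.length).filter (fun i => (P.getD i []).length < L)).length ≤
      1 + ∑ k ∈ Finset.Icc 1 L, σ ^ (k + 1) :=
  short_phrases_bound_general σ L P hne hfollow
end

section
/- Let m ≥ 8 be a power of 2. If the complete directed graph K*_m on m vertices decomposes into m−1 edge-disjoint Hamiltonian directed cycles, then there exist m−1 permutations π_1,...,π_{m−1} of {1,...,m} such that for every ordered pair (i,j) of distinct elements of {1,...,m}, the event 'j immediately follows i' occurs at most once in total, where 'j immediately follows i' means either π_h(k)=i and π_h(k+1)=j for some h and some k < m, or π_h(m)=i and π_{h+1}(1)=j for some h < m−1. -/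
/-! List every Hamiltonian cycle `C h` from the same vertex `x`. The last entry of `π h` is then
`(C h)⁻¹ x` and the first entry of `π (h + 1)` is `x`, so the junction between consecutive
permutations is an edge of `C h`, just like every adjacency inside `π h`. Hence each occurrence
of "`j` immediately follows `i`" is the edge `i → j` of the cycle containing it, and
edge-disjointness leaves at most one such occurrence. -/

open Finset

namespace Equiv.Perm

section

variable {α : Type*} {σ : Perm α}

theorem IsCycle.isCycleOn_univ [Fintype α] (hσ : σ.IsCycle) (hfree : ∀ x, σ x ≠ x) :
    σ.IsCycleOn (univ : Finset α) := by
  simpa [hfree] using hσ.isCycleOn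

theorem IsCycleOn.injOn_pow_apply {s : Finset α} {a : α} (hσ : σ.IsCycleOn s) (ha : a ∈ s) :
    Set.InjOn (fun k : ℕ => (σ ^ k) a) (Set.Iio #s) := by
  intro k hk l hl hkl
  simpa [Nat.ModEq, Nat.mod_eq_of_lt hk, Nat.mod_eq_of_lt hl] using
    (hσ.pow_apply_eq_pow_apply ha).1 hkl

end

section

variable {n : ℕ} {σ : Perm (Fin n)}

/-- Position `k` holds `σ ^ k x`: the paper's permutation induced by the cycle `σ` started
at `x`. -/
noncomputable def IsCycleOn.enumFrom (hσ : σ.IsCycleOn (univ : Finset (Fin n))) (x : Fin n) :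
    Perm (Fin n) :=
  Equiv.ofBijective (fun k : Fin n => (σ ^ (k : ℕ)) x) <| Finite.injective_iff_bijective.1
    fun k l hkl => Fin.ext <| hσ.injOn_pow_apply (mem_univ x) (by simp) (by simp) hkl

variable (hσ : σ.IsCycleOn (univ : Finset (Fin n))) (x : Fin n)

theorem IsCycleOn.enumFrom_apply (k : Fin n) : hσ.enumFrom x k = (σ ^ (k : ℕ)) x := rfl

theorem IsCycleOn.apply_enumFrom_of_succ_lt (k : Fin n) (hk : (k : ℕ) + 1 < n) :
    σ (hσ.enumFrom x k) = hσ.enumFrom x ⟨k + 1, hk⟩ := by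
  simp only [enumFrom_apply, pow_succ', mul_apply]

theorem IsCycleOn.apply_enumFrom_of_succ_eq (k : Fin n) (hk : (k : ℕ) + 1 = n) :
    σ (hσ.enumFrom x k) = x := by
  have hcard := hσ.pow_card_apply (mem_univ x)
  rw [card_univ, Fintype.card_fin] at hcard
  rwa [enumFrom_apply, ← mul_apply, ← pow_succ', hk]

end

end Equiv.Perm

open Equiv.Perm

/-- Positions `(h, k)` of `i` in the word `π 0 ++ π 1 ++ ⋯ ++ π (m - 2)` (indexed from `0`)
that are immediately followed by `j`. -/
def followPositions {m : ℕ} (π : Fin (m - 1) → Equiv.Perm (Fin m)) (i j : Fin m) :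
    Set (Fin (m - 1) × Fin m) :=
  {p | (∃ hk : (p.2 : ℕ) + 1 < m, π p.1 p.2 = i ∧ π p.1 ⟨(p.2 : ℕ) + 1, hk⟩ = j) ∨
    ((p.2 : ℕ) + 1 = m ∧ ∃ hh : (p.1 : ℕ) + 1 < m - 1,
      π p.1 p.2 = i ∧ π ⟨(p.1 : ℕ) + 1, hh⟩ ⟨0, by omega⟩ = j)}

section

variable {m : ℕ} {C : Fin (m - 1) → Equiv.Perm (Fin m)}
  (hC : ∀ h, (C h).IsCycleOn (univ : Finset (Fin m))) (x : Fin m)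

theorem apply_of_mem_followPositions_enumFrom {i j : Fin m} {p : Fin (m - 1) × Fin m}
    (hp : p ∈ followPositions (fun h => (hC h).enumFrom x) i j) :
    (hC p.1).enumFrom x p.2 = i ∧ C p.1 i = j := by
  rcases hp with ⟨hk, hi, hj⟩ | ⟨hk, _, hi, hj⟩
  · exact ⟨hi, hi ▸ hj ▸ (hC p.1).apply_enumFrom_of_succ_lt x p.2 hk⟩
  · refine ⟨hi, ?_⟩
    rw [← hi, ← hj, (hC p.1).apply_enumFrom_of_succ_eq x p.2 hk]
    simp [IsCycleOn.enumFrom_apply]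

theorem subsingleton_followPositions_enumFrom
    (hdisj : ∀ h h', h ≠ h' → ∀ v, C h v ≠ C h' v) (i j : Fin m) :
    (followPositions (fun h => (hC h).enumFrom x) i j).Subsingleton := by
  intro p hp q hq
  obtain ⟨hpi, hpj⟩ := apply_of_mem_followPositions_enumFrom hC x hp
  obtain ⟨hqi, hqj⟩ := apply_of_mem_followPositions_enumFrom hC x hq
  have hfst : p.1 = q.1 := by
    by_contra hne
    exact hdisj p.1 q.1 hne i (hpj.trans hqj.symm)
  obtain ⟨h, k⟩ := p
  obtain ⟨h', k'⟩ := q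
  subst hfst
  simpa using ((hC h).enumFrom x).injective (hpi.trans hqi.symm)

end

theorem perms_from_hamiltonian_decomposition (m : ℕ) (hm : 8 ≤ m)
    -- a decomposition of the complete directed graph on `Fin m` into `m - 1`
    -- edge-disjoint Hamiltonian directed cycles, each given by its successor permutation
    (C : Fin (m - 1) → Equiv.Perm (Fin m))
    (hham : ∀ h, (C h).IsCycle ∧ ∀ v, C h v ≠ v)
    (hdisj : ∀ h h', h ≠ h' → ∀ v, C h v ≠ C h' v) :
    ∃ π : Fin (m - 1) → Equiv.Perm (Fin m),
      ∀ i j : Fin m, i ≠ j →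
        Set.Subsingleton {p : Fin (m - 1) × Fin m |
          (∃ hk : (p.2 : ℕ) + 1 < m, π p.1 p.2 = i ∧ π p.1 ⟨(p.2 : ℕ) + 1, hk⟩ = j) ∨
          ((p.2 : ℕ) + 1 = m ∧ ∃ hh : (p.1 : ℕ) + 1 < m - 1,
            π p.1 p.2 = i ∧ π ⟨(p.1 : ℕ) + 1, hh⟩ ⟨0, by omega⟩ = j)} := by
  have hC : ∀ h, (C h).IsCycleOn (univ : Finset (Fin m)) := fun h =>
    (hham h).1.isCycleOn_univ (hham h).2
  exact ⟨fun h => (hC h).enumFrom ⟨0, by omega⟩, fun i j _ =>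
    subsingleton_followPositions_enumFrom hC ⟨0, by omega⟩ hdisj i j⟩
end

section
/- Let b ≥ 2 be even, let S be the concatenation of all 2^b binary strings of length b in lexicographic (increasing numeric) order, and let S_i denote S cyclically shifted left by i positions. Partition S_i into 2^b consecutive blocks R^{(i)}_1,...,R^{(i)}_{2^b} of length b each. Then for any 1 ≤ i < j ≤ b/2 and any indices k, h with 1 ≤ k, h < 2^b, if R^{(i)}_k = R^{(j)}_h then R^{(i)}_{k+1} ≠ R^{(j)}_{h+1}. -/
/-- Bit at position `t` (0-based) of `S`, the concatenation of all `2^b` binary strings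
of length `b` in increasing numeric order, most significant bit first. -/
def sBit (b t : ℕ) : Bool := Nat.testBit (t / b) (b - 1 - t % b)

/-- The `k`-th (1-based) length-`b` block of `S_i`, the cyclic left shift of `S` by `i`. -/
def shiftBlock (b i k : ℕ) : List Bool :=
  (List.range b).map (fun r => sBit b (((k - 1) * b + r + i) % (b * 2 ^ b)))

/-!
Write `k = m + 1`, `h = n + 1` and `j = i + d`. Two equal pairs of consecutive blocks are one
window of length `2b` of `S`, read once across `m, m + 1, m + 2` at offset `i` and once across
`n, n + 1, n + 2` at offset `j`; the cyclic wrap-around is harmless because only the low `b` bits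
of each number are read. An increment `a ↦ a + 1` always flips bit `0`, and if it flips bit `p`
then it turns all bits below `p` from `1` into `0`. In the window, bit `0` of `n, n + 1` faces
bit `d` of `m, m + 1`, so `m + 1` is even; bit `0` of `m, m + 1` faces bit `b - d` of
`n + 1, n + 2`, so bit `b - d - 1` is set in `n + 1` and clear in `n + 2`. That bit faces the top
bit of `m + 1, m + 2`, so the increment of `m + 1` flips bit `b - 1` and `m + 1` is odd.
-/

theorem Nat.testBit_zero_add_one_ne (a : ℕ) : (a + 1).testBit 0 ≠ a.testBit 0 := by
  simp only [Nat.testBit_zero, ne_eq, decide_eq_decide]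
  omega

theorem Nat.testBit_of_lt_of_testBit_add_one_ne {a p t : ℕ}
    (h : (a + 1).testBit p ≠ a.testBit p) (ht : t < p) :
    a.testBit t = true ∧ (a + 1).testBit t = false := by
  obtain ⟨c, hc⟩ : 2 ^ p ∣ a + 1 := by
    by_contra hndvd
    apply h
    rw [← zero_add p, ← Nat.testBit_div_two_pow, ← Nat.testBit_div_two_pow,
      Nat.succ_div_of_not_dvd hndvd]
  have ha : a = 2 ^ p * (c - 1) + (2 ^ p - 1) := by
    have hc0 : 0 < c := Nat.pos_of_ne_zero (by rintro rfl; simp at hc)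
    have := Nat.le_mul_of_pos_right (2 ^ p) hc0
    have := Nat.two_pow_pos p
    rw [Nat.mul_sub_one]
    omega
  constructor
  · rw [ha, Nat.testBit_two_pow_mul_add _ (Nat.sub_one_lt (Nat.two_pow_pos p).ne'),
      if_pos ht, Nat.testBit_two_pow_sub_one, decide_eq_true ht]
  · rw [hc, Nat.testBit_two_pow_mul, decide_eq_false (Nat.not_le.mpr ht), Bool.false_and]

theorem sBit_mod_eq_testBit {b a s c p : ℕ} (hp : p < b) (hs : s = c * b + (b - 1 - p)) :
    sBit b ((a * b + s) % (b * 2 ^ b)) = (a + c).testBit p := by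
  have hb : 0 < b := by omega
  have hab : a * b + s = (b - 1 - p) + (a + c) * b := by rw [hs]; ring
  have hdiv : (a * b + s) / b = a + c := by
    rw [hab, Nat.add_mul_div_right _ _ hb, Nat.div_eq_of_lt (by omega), zero_add]
  have hmod : (a * b + s) % b = b - 1 - p := by
    rw [hab, Nat.add_mul_mod_self_right, Nat.mod_eq_of_lt (by omega)]
  rw [sBit, Nat.mod_mul_right_div_self, Nat.mod_mul_right_mod, Nat.testBit_mod_two_pow, hdiv,
    hmod, Nat.sub_sub_self (by omega), decide_eq_true hp, Bool.true_and]

theorem shiftBlock_eq_iff {b i j k h : ℕ} :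
    shiftBlock b i k = shiftBlock b j h ↔ ∀ r < b,
      sBit b (((k - 1) * b + r + i) % (b * 2 ^ b)) =
        sBit b (((h - 1) * b + r + j) % (b * 2 ^ b)) := by
  simp only [shiftBlock, List.map_inj_left, List.mem_range]

/-- Position `r` (from the left) of the window formed by the two pairs of blocks is bit `p` of
`m + c` and bit `q` of `n + c'`. -/
theorem testBit_eq_of_shiftBlock_pair_eq {b i j m n : ℕ}
    (h₁ : shiftBlock b i (m + 1) = shiftBlock b j (n + 1))
    (h₂ : shiftBlock b i (m + 2) = shiftBlock b j (n + 2))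
    (r c c' : ℕ) {p q : ℕ} (hr : r < 2 * b) (hp : p < b) (hq : q < b)
    (hi : r + i = c * b + (b - 1 - p)) (hj : r + j = c' * b + (b - 1 - q)) :
    (m + c).testBit p = (n + c').testBit q := by
  have hwindow : sBit b ((m * b + (r + i)) % (b * 2 ^ b)) =
      sBit b ((n * b + (r + j)) % (b * 2 ^ b)) := by
    rcases lt_or_ge r b with hrb | hrb
    · simpa only [Nat.add_sub_cancel, add_assoc] using shiftBlock_eq_iff.mp h₁ r hrb
    · have hshift : ∀ a s, (a + 2 - 1) * b + (r - b) + s = a * b + (r + s) := fun a s => by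
        rw [show a + 2 - 1 = a + 1 by omega, add_mul]
        omega
      simpa only [hshift] using shiftBlock_eq_iff.mp h₂ (r - b) (by omega)
  rwa [sBit_mod_eq_testBit hp hi, sBit_mod_eq_testBit hq hj] at hwindow

theorem shifted_blocks_no_repeated_pair_general (b : ℕ)
    (i j k h : ℕ) (hi1 : 1 ≤ i) (hij : i < j) (hjb : j ≤ b / 2)
    (hk1 : 1 ≤ k) (hh1 : 1 ≤ h)
    (heq : shiftBlock b i k = shiftBlock b j h) :
    shiftBlock b i (k + 1) ≠ shiftBlock b j (h + 1) := by
  intro heq'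
  obtain ⟨m, rfl⟩ : ∃ m, k = m + 1 := ⟨k - 1, by omega⟩
  obtain ⟨n, rfl⟩ : ∃ n, h = n + 1 := ⟨h - 1, by omega⟩
  obtain ⟨d, rfl⟩ : ∃ d, j = i + d := ⟨j - i, by omega⟩
  have read := testBit_eq_of_shiftBlock_pair_eq heq heq'
  have e₁ : m.testBit d = n.testBit 0 := by apply read (b - i - d - 1) 0 0 <;> omega
  have e₂ : (m + 1).testBit d = (n + 1).testBit 0 := by
    apply read (2 * b - i - d - 1) 1 1 <;> omega
  have e₃ : m.testBit 0 = (n + 1).testBit (b - d) := by apply read (b - i - 1) 0 1 <;> omega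
  have e₄ : (m + 1).testBit 0 = (n + 2).testBit (b - d) := by
    apply read (2 * b - i - 1) 1 2 <;> omega
  have e₅ : (m + 1).testBit (b - 1) = (n + 1).testBit (b - d - 1) := by
    apply read (b - i) 1 1 <;> omega
  have e₆ : (m + 2).testBit (b - 1) = (n + 2).testBit (b - d - 1) := by
    apply read (2 * b - i) 2 2 <;> omega
  have hflip_m : (m + 1).testBit d ≠ m.testBit d := by
    rw [e₁, e₂]
    exact Nat.testBit_zero_add_one_ne n
  have hflip_n : (n + 2).testBit (b - d) ≠ (n + 1).testBit (b - d) := by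
    rw [← e₃, ← e₄]
    exact Nat.testBit_zero_add_one_ne m
  obtain ⟨hn_set, hn_clear⟩ :=
    Nat.testBit_of_lt_of_testBit_add_one_ne hflip_n (t := b - d - 1) (by omega)
  have hflip_top : (m + 2).testBit (b - 1) ≠ (m + 1).testBit (b - 1) := by
    rw [e₅, e₆, hn_set, hn_clear]
    decide
  have hm_even := (Nat.testBit_of_lt_of_testBit_add_one_ne hflip_m (t := 0) (by omega)).2
  have hm_odd := (Nat.testBit_of_lt_of_testBit_add_one_ne hflip_top (t := 0) (by omega)).1
  exact Bool.false_ne_true (hm_even.symm.trans hm_odd)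

theorem shifted_blocks_no_repeated_pair (b : ℕ) (hb : 2 ≤ b) (heven : Even b)
    (i j k h : ℕ) (hi1 : 1 ≤ i) (hij : i < j) (hjb : j ≤ b / 2)
    (hk1 : 1 ≤ k) (hk : k < 2 ^ b) (hh1 : 1 ≤ h) (hh : h < 2 ^ b)
    (heq : shiftBlock b i k = shiftBlock b j h) :
    shiftBlock b i (k + 1) ≠ shiftBlock b j (h + 1) :=
  shifted_blocks_no_repeated_pair_general b i j k h hi1 hij hjb hk1 hh1 heq
end

section
/- The greedy LZ77 parsing of any string T has the minimum number of phrases among all LZ-like parsings of T. -/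
/-- An LZ-like parsing of `T`: a factorization into non-empty phrases where each
phrase is a single symbol or has an occurrence in `T` starting strictly before it. -/
def IsLZLike {α : Type*} (T : List α) (P : List (List α)) : Prop :=
  T = P.flatten ∧ (∀ Q ∈ P, Q ≠ []) ∧
  ∀ j, j < P.length →
    (P.getD j []).length = 1 ∨
    ∃ p, p < phraseStart P j ∧ (T.drop p).take (P.getD j []).length = P.getD j []

/-- The greedy LZ77 parsing: an LZ-like parsing in which no phrase can be extended,
i.e., no strictly longer prefix of the remaining suffix has an earlier occurrence. -/
def IsGreedyLZ {α : Type*} (T : List α) (P : List (List α)) : Prop :=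
  IsLZLike T P ∧
  ∀ j, j < P.length → ∀ L, (P.getD j []).length < L →
    phraseStart P j + L ≤ T.length →
    ¬ ∃ p, p < phraseStart P j ∧
      (T.drop p).take L = (T.drop (phraseStart P j)).take L

/-- The Relative Lempel--Ziv parsing of `T` with reference `R`: each phrase is the
longest prefix of the remaining suffix occurring as a substring of `R`, or a literal. -/
def IsRLZ {α : Type*} (R T : List α) (P : List (List α)) : Prop :=
  T = P.flatten ∧ (∀ Q ∈ P, Q ≠ []) ∧
  (∀ j, j < P.length → (P.getD j []).length = 1 ∨ (P.getD j []) <:+: R) ∧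
  ∀ j, j < P.length → ∀ L, (P.getD j []).length < L →
    phraseStart P j + L ≤ T.length →
    ¬ ((T.drop (phraseStart P j)).take L <:+: R)

section

variable {α : Type*}

lemma take_drop_add_eq_of_take_drop_eq {l : List α} {a b n : ℕ} (d : ℕ)
    (h : (l.drop a).take n = (l.drop b).take n) :
    (l.drop (a + d)).take (n - d) = (l.drop (b + d)).take (n - d) := by
  have := congrArg (List.drop d) h
  rwa [List.drop_take, List.drop_take, List.drop_drop, List.drop_drop] at this

lemma phraseStart_mono (P : List (List α)) : Monotone (phraseStart P) :=
  fun _ _ h => ((List.take_prefix_take_left h).flatten).length_le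

lemma phraseStart_le_length_flatten (P : List (List α)) (j : ℕ) :
    phraseStart P j ≤ P.flatten.length :=
  ((List.take_prefix j P).flatten).length_le

lemma phraseStart_of_length_le {P : List (List α)} {j : ℕ} (hj : P.length ≤ j) :
    phraseStart P j = P.flatten.length := by
  rw [phraseStart, List.take_of_length_le hj]

lemma phraseStart_succ {P : List (List α)} {j : ℕ} (hj : j < P.length) :
    phraseStart P (j + 1) = phraseStart P j + (P.getD j []).length := by
  rw [phraseStart, phraseStart, List.take_add_one, List.flatten_append, List.length_append,
    List.getElem?_eq_getElem hj, List.getD_eq_getElem _ _ hj]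
  simp

lemma take_drop_phraseStart {P : List (List α)} {j : ℕ} (hj : j < P.length) :
    (P.flatten.drop (phraseStart P j)).take (P.getD j []).length = P.getD j [] := by
  have hsplit : P.flatten = (P.take j).flatten ++ (P.drop j).flatten := by
    rw [← List.flatten_append, List.take_append_drop]
  rw [hsplit, phraseStart, List.drop_left, List.drop_eq_getElem_cons hj, List.flatten_cons,
    List.getD_eq_getElem _ _ hj, List.take_left]

lemma length_getD_pos {P : List (List α)} (hne : ∀ Q ∈ P, Q ≠ []) {j : ℕ} (hj : j < P.length) :
    0 < (P.getD j []).length := by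
  rw [List.getD_eq_getElem _ _ hj]
  exact List.length_pos_iff.mpr (hne _ (List.getElem_mem hj))

lemma length_le_of_length_flatten_le_phraseStart {P : List (List α)} (hne : ∀ Q ∈ P, Q ≠ [])
    {k : ℕ} (h : P.flatten.length ≤ phraseStart P k) : P.length ≤ k := by
  by_contra! hk
  have := phraseStart_le_length_flatten P (k + 1)
  rw [phraseStart_succ hk] at this
  have := length_getD_pos hne hk
  omega

theorem IsGreedyLZ.phraseStart_succ_le {T : List α} {P Q : List (List α)} (hP : IsGreedyLZ T P)
    (hQ : IsLZLike T Q) {j : ℕ} (hjP : j < P.length) (hjQ : j < Q.length)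
    (h : phraseStart Q j ≤ phraseStart P j) :
    phraseStart Q (j + 1) ≤ phraseStart P (j + 1) := by
  obtain ⟨⟨-, hPne, -⟩, hgreedy⟩ := hP
  obtain ⟨hTQ, -, hQocc⟩ := hQ
  rw [phraseStart_succ hjP, phraseStart_succ hjQ]
  have hPpos := length_getD_pos hPne hjP
  rcases hQocc j hjQ with hlit | ⟨p, hp, hocc⟩
  · omega
  by_contra! hover
  set sP := phraseStart P j
  set sQ := phraseStart Q j
  set n := (Q.getD j []).length
  have hend : sQ + n ≤ T.length := by
    have := phraseStart_le_length_flatten Q (j + 1)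
    rwa [phraseStart_succ hjQ, ← hTQ] at this
  have hshift := take_drop_add_eq_of_take_drop_eq (sP - sQ)
    (hocc.trans (hTQ ▸ take_drop_phraseStart hjQ).symm)
  rw [Nat.add_sub_cancel' h] at hshift
  exact hgreedy j hjP (n - (sP - sQ)) (by omega) (by omega) ⟨p + (sP - sQ), by omega, hshift⟩

theorem IsGreedyLZ.phraseStart_le {T : List α} {P Q : List (List α)} (hP : IsGreedyLZ T P)
    (hQ : IsLZLike T Q) (j : ℕ) : phraseStart Q j ≤ phraseStart P j := by
  induction j with
  | zero => simp [phraseStart]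
  | succ j ih =>
    rcases lt_or_ge j P.length with hjP | hjP
    · rcases lt_or_ge j Q.length with hjQ | hjQ
      · exact hP.phraseStart_succ_le hQ hjP hjQ ih
      · calc phraseStart Q (j + 1) = phraseStart Q j := by
              rw [phraseStart_of_length_le hjQ, phraseStart_of_length_le (by omega)]
          _ ≤ phraseStart P j := ih
          _ ≤ phraseStart P (j + 1) := phraseStart_mono P j.le_succ
    · rw [phraseStart_of_length_le (by omega : P.length ≤ j + 1), ← hP.1.1, hQ.1]
      exact phraseStart_le_length_flatten Q (j + 1)

end

theorem greedy_lz_minimal {α : Type*} (T : List α) (P Q : List (List α))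
    (hP : IsGreedyLZ T P) (hQ : IsLZLike T Q) : P.length ≤ Q.length := by
  refine length_le_of_length_flatten_le_phraseStart hP.1.2.1 ?_
  calc P.flatten.length = Q.flatten.length := by rw [← hP.1.1, ← hQ.1]
    _ = phraseStart Q Q.length := (phraseStart_of_length_le le_rfl).symm
    _ ≤ phraseStart P Q.length := hP.phraseStart_le hQ _
end
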